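/- arXiv:1412.3322 — 2 statements merged into one kernel-verified Lean document; each statement's English description precedes it below -/
import Mathlib

section
/- Let (X_k) be a d-type GW process and a ∈ (0,∞)^d with f_i(a) < ∞, and let (X̄_k) be the associated process with respect to a. Then for every initial state x_0, all times k_1 ≤ … ≤ k_j, all states x_1,…,x_j ∈ ℕ^d, and every n ∈ ℕ^d with P_{x_0}(N = n) > 0, the conditional distributions agree: P_{x_0}(X_{k_1}=x_1,…,X_{k_j}=x_j | N = n) = P_{x_0}(X̄_{k_1}=x_1,…,X̄_{k_j}=x_j | N̄ = n). -/
open MeasureTheory Filter Topology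
open scoped ENNReal NNReal

noncomputable section

namespace GW

variable {d : ℕ}

/-- `a^k = ∏_j a_j^{k_j}` for a multi-index `k`. -/
def npow (a : Fin d → ℝ) (k : Fin d → ℕ) : ℝ := ∏ j, a j ^ k j

/-- Dirac mass at `0` on `ℕ^d`. -/
def delta : (Fin d → ℕ) → ℝ := fun k => if k = 0 then 1 else 0

/-- Convolution of two (sub)probability weight functions on `ℕ^d`. -/
def conv (p q : (Fin d → ℕ) → ℝ) : (Fin d → ℕ) → ℝ :=
  fun k => ∑' a : {a : Fin d → ℕ // a ≤ k}, p a.1 * q (k - a.1)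

/-- `n`-fold convolution power `p^{*n}` (with `p^{*0} = δ_0`). -/
def convIter (p : (Fin d → ℕ) → ℝ) : ℕ → (Fin d → ℕ) → ℝ
  | 0 => delta
  | n + 1 => conv p (convIter p n)

/-- One-step transition probabilities of the multitype GW process:
`P_1(x, ·) = p_1^{*x_1} * ⋯ * p_d^{*x_d}`. -/
def trans (p : Fin d → (Fin d → ℕ) → ℝ) (x : Fin d → ℕ) : (Fin d → ℕ) → ℝ :=
  (List.ofFn (fun i => convIter (p i) (x i))).foldr conv delta

/-- `p` is a probability mass function on `ℕ^d`. -/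
structure IsPMF (p : (Fin d → ℕ) → ℝ) : Prop where
  nonneg : ∀ k, 0 ≤ p k
  hasSum : HasSum p 1

/-- `μ x` is the law on path space of the multitype GW process with offspring
distributions `p` started at `x`: a probability measure whose finite-dimensional
distributions are products of one-step GW transition probabilities. -/
def IsGW (p : Fin d → (Fin d → ℕ) → ℝ)
    (μ : (Fin d → ℕ) → Measure (ℕ → Fin d → ℕ)) : Prop :=
  (∀ x, IsProbabilityMeasure (μ x)) ∧
  ∀ (x : Fin d → ℕ) (k : ℕ) (xs : ℕ → Fin d → ℕ), xs 0 = x →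
    μ x {ω | ∀ j ≤ k, ω j = xs j}
      = ENNReal.ofReal (∏ j ∈ Finset.range k, trans p (xs j) (xs (j + 1)))

/-- Total progeny of type `i` along a path (valued in `ℝ≥0∞`). -/
def Ntot (ω : ℕ → Fin d → ℕ) (i : Fin d) : ℝ≥0∞ := ∑' k, (ω k i : ℝ≥0∞)

/- The associated process is an exponential tilt of the original one: its one-step transition
`x → y` has weight `a^y f(a)^{-x} P_1(x, y)`. Along a path that dies out with total progeny `n`
started from `x₀`, these factors telescope to the constant `a^{n - x₀} f(a)^{-n}`, so on the
countable event `{N = n}` the two path laws differ by a constant factor, which cancels in the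
conditional probabilities. -/

lemma npow_add (a : Fin d → ℝ) (u v : Fin d → ℕ) : npow a (u + v) = npow a u * npow a v := by
  simp only [npow, Pi.add_apply, pow_add, Finset.prod_mul_distrib]

lemma npow_sum {ι : Type*} (a : Fin d → ℝ) (s : Finset ι) (v : ι → Fin d → ℕ) :
    npow a (∑ j ∈ s, v j) = ∏ j ∈ s, npow a (v j) := by
  simp only [npow, Finset.sum_apply]
  rw [Finset.prod_comm]
  simp only [Finset.prod_pow_eq_pow_sum]

lemma npow_pos {a : Fin d → ℝ} (ha : ∀ i, 0 < a i) (k : Fin d → ℕ) : 0 < npow a k :=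
  Finset.prod_pos fun i _ => pow_pos (ha i) _

/-- Exponential tilting; the associated offspring law is `p̄ᵢ = tilt a (fᵢ(a))⁻¹ pᵢ`. -/
def tilt (a : Fin d → ℝ) (c : ℝ) (q : (Fin d → ℕ) → ℝ) : (Fin d → ℕ) → ℝ :=
  fun k => npow a k * q k * c

lemma tilt_one_delta (a : Fin d → ℝ) : tilt a 1 delta = delta := by
  funext k
  by_cases hk : k = 0 <;> simp [tilt, delta, hk, npow]

lemma conv_tilt (a : Fin d → ℝ) (c₁ c₂ : ℝ) (q r : (Fin d → ℕ) → ℝ) :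
    conv (tilt a c₁ q) (tilt a c₂ r) = tilt a (c₁ * c₂) (conv q r) := by
  funext k
  simp only [conv, tilt]
  rw [← tsum_mul_left, ← tsum_mul_right]
  refine tsum_congr fun u => ?_
  have hk : npow a k = npow a u * npow a (k - u) := by rw [← npow_add, add_tsub_cancel_of_le u.2]
  rw [hk]
  ring

lemma convIter_tilt (a : Fin d → ℝ) (c : ℝ) (q : (Fin d → ℕ) → ℝ) :
    ∀ m, convIter (tilt a c q) m = tilt a (c ^ m) (convIter q m)
  | 0 => by rw [pow_zero, convIter, convIter, tilt_one_delta]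
  | m + 1 => by rw [convIter, convIter, convIter_tilt a c q m, conv_tilt, pow_succ']

lemma foldr_conv_tilt {ι : Type*} (a : Fin d → ℝ) (c : ι → ℝ) (q : ι → (Fin d → ℕ) → ℝ) :
    ∀ l : List ι, (l.map fun i => tilt a (c i) (q i)).foldr conv delta
      = tilt a (l.map c).prod ((l.map q).foldr conv delta)
  | [] => (tilt_one_delta a).symm
  | i :: l => by
    simp only [List.map_cons, List.foldr_cons, List.prod_cons, foldr_conv_tilt a c q l,
      conv_tilt]

lemma trans_tilt (a c : Fin d → ℝ) (p : Fin d → (Fin d → ℕ) → ℝ) (x : Fin d → ℕ) :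
    trans (fun i => tilt a (c i) (p i)) x = tilt a (npow c x) (trans p x) := by
  have h := foldr_conv_tilt a (fun i => c i ^ x i) (fun i => convIter (p i) (x i))
    (List.finRange d)
  simp only [← List.ofFn_eq_map, List.prod_ofFn] at h
  simpa only [trans, convIter_tilt, npow] using h

lemma prod_range_trans_tilt (a c : Fin d → ℝ) (p : Fin d → (Fin d → ℕ) → ℝ)
    (π : ℕ → Fin d → ℕ) (K : ℕ) :
    ∏ j ∈ Finset.range K, trans (fun i => tilt a (c i) (p i)) (π j) (π (j + 1))
      = npow a (∑ j ∈ Finset.range K, π (j + 1)) * npow c (∑ j ∈ Finset.range K, π j)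
        * ∏ j ∈ Finset.range K, trans p (π j) (π (j + 1)) := by
  simp only [trans_tilt, tilt, Finset.prod_mul_distrib, npow_sum]
  ring

lemma conv_delta_left (q : (Fin d → ℕ) → ℝ) : conv delta q = q := by
  funext k
  rw [conv, tsum_eq_single ⟨0, zero_le⟩]
  · simp [delta]
  · intro u hu
    have hu0 : (u : Fin d → ℕ) ≠ 0 := fun h => hu (Subtype.ext h)
    simp [delta, hu0]

lemma trans_zero_left (p : Fin d → (Fin d → ℕ) → ℝ) : trans p 0 = delta := by
  have h : ∀ m, (List.replicate m (delta (d := d))).foldr conv delta = delta := by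
    intro m
    induction m with
    | zero => rfl
    | succ m ih => rw [List.replicate_succ, List.foldr_cons, ih, conv_delta_left]
  have hofFn : (List.ofFn fun i => convIter (p i) ((0 : Fin d → ℕ) i)) = List.replicate d delta := by
    simp only [Pi.zero_apply]
    exact List.ofFn_const d delta
  rw [trans, hofFn, h]

lemma IsPMF.tsum_mul_npow_pos {q : (Fin d → ℕ) → ℝ} (hq : IsPMF q) {a : Fin d → ℝ}
    (ha : ∀ i, 0 < a i) (hs : Summable fun k => q k * npow a k) :
    0 < ∑' k, q k * npow a k := by
  obtain ⟨k, hk⟩ : ∃ k, 0 < q k := by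
    by_contra! h
    have hzero : q = 0 := funext fun k => (h k).antisymm (hq.nonneg k)
    exact one_ne_zero (hq.hasSum.unique (hzero ▸ hasSum_zero))
  exact hs.tsum_pos (fun k => mul_nonneg (hq.nonneg k) (npow_pos ha k).le) k
    (mul_pos hk (npow_pos ha k))

lemma finite_support_of_Ntot_ne_top {π : ℕ → Fin d → ℕ} (h : ∀ i, Ntot π i ≠ ∞) :
    (Function.support π).Finite := by
  have hfin : ∀ i, {k | (1 : ℝ≥0∞) ≤ π k i}.Finite := fun i =>
    ENNReal.finite_const_le_of_tsum_ne_top (h i) one_ne_zero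
  refine (Set.finite_iUnion hfin).subset fun k hk => ?_
  obtain ⟨i, hi⟩ := Function.ne_iff.mp hk
  exact Set.mem_iUnion.mpr ⟨i, by simpa [Nat.one_le_iff_ne_zero] using hi⟩

lemma countable_setOf_Ntot_eq (n : Fin d → ℕ) :
    {ω : ℕ → Fin d → ℕ | ∀ i, Ntot ω i = n i}.Countable := by
  refine (Set.countable_range fun g : ℕ →₀ (Fin d → ℕ) => ⇑g).mono fun π hπ => ?_
  have hfin := finite_support_of_Ntot_ne_top fun i => (hπ i).trans_ne (ENNReal.natCast_ne_top _)
  exact ⟨Finsupp.ofSupportFinite π hfin, rfl⟩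

lemma exists_sum_range_eq_of_Ntot_eq {π : ℕ → Fin d → ℕ} {n : Fin d → ℕ}
    (h : ∀ i, Ntot π i = n i) :
    ∃ M, (∀ j ≥ M, π j = 0) ∧ ∑ j ∈ Finset.range M, π j = n := by
  obtain ⟨B, hB⟩ := (finite_support_of_Ntot_ne_top fun i =>
    (h i).trans_ne (ENNReal.natCast_ne_top _)).bddAbove
  have hM : ∀ j ≥ B + 1, π j = 0 := fun j hj =>
    Function.notMem_support.mp fun hj' => by have := hB hj'; omega
  refine ⟨B + 1, hM, funext fun i => ?_⟩
  have hsum : Ntot π i = ∑ j ∈ Finset.range (B + 1), (π j i : ℝ≥0∞) :=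
    tsum_eq_sum fun j hj => by simp [hM j (by simpa using hj)]
  rw [Finset.sum_apply]
  exact_mod_cast hsum.symm.trans (h i)

lemma measurableSet_setOf_forall_le_eq (π : ℕ → Fin d → ℕ) (k : ℕ) :
    MeasurableSet {ω : ℕ → Fin d → ℕ | ∀ j ≤ k, ω j = π j} := by
  simp only [Set.ofPred_forall]
  exact .iInter fun j => .iInter fun _ => measurable_pi_apply j (measurableSet_singleton _)

section PathLaw

variable {p : Fin d → (Fin d → ℕ) → ℝ} {μ : (Fin d → ℕ) → Measure (ℕ → Fin d → ℕ)}

/-- Continuity from above along the cylinders of `π`; their weights are constant from the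
extinction time `M` on because `trans p 0 0 = 1`. -/
lemma IsGW.measure_singleton (hμ : IsGW p μ) {π : ℕ → Fin d → ℕ} {M : ℕ}
    (hM : ∀ j ≥ M, π j = 0) :
    μ (π 0) {π} = ENNReal.ofReal (∏ j ∈ Finset.range M, trans p (π j) (π (j + 1))) := by
  have := hμ.1 (π 0)
  set cyl : ℕ → Set (ℕ → Fin d → ℕ) := fun k => {ω | ∀ j ≤ k, ω j = π j}
  have hπ : {π} = ⋂ k, cyl k := by
    ext ω
    simp only [Set.mem_singleton_iff, Set.mem_iInter, cyl, Set.mem_ofPred_eq]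
    exact ⟨fun h _ _ _ => h ▸ rfl, fun h => funext fun j => h j j le_rfl⟩
  have hlim := tendsto_measure_iInter_atTop (μ := μ (π 0)) (s := cyl)
    (fun k => (measurableSet_setOf_forall_le_eq π k).nullMeasurableSet)
    (fun j k hjk ω hω i hi => hω i (hi.trans hjk)) ⟨0, measure_ne_top _ _⟩
  rw [hπ]
  refine tendsto_nhds_unique hlim (tendsto_atTop_of_eventually_const fun k (hk : k ≥ M) => ?_)
  rw [Function.comp_apply, hμ.2 _ k π rfl]
  congr 1
  refine (Finset.prod_subset (Finset.range_subset_range.mpr hk) fun j hjk hjM => ?_).symm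
  simp only [Finset.mem_range, not_lt] at hjk hjM
  rw [hM j hjM, hM (j + 1) (by omega), trans_zero_left]
  simp [delta]

lemma IsGW.measure_singleton_of_ne (hμ : IsGW p μ) {x : Fin d → ℕ} {π : ℕ → Fin d → ℕ}
    (h0 : π 0 ≠ x) : μ x {π} = 0 := by
  have := hμ.1 x
  have hstart : μ x {ω | ∀ j ≤ 0, ω j = x} = 1 := by
    simpa using hμ.2 x 0 (fun _ => x) rfl
  rw [← prob_compl_eq_zero_iff (measurableSet_setOf_forall_le_eq (fun _ => x) 0)] at hstart
  refine measure_mono_null (fun ω hω => ?_) hstart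
  rw [Set.mem_singleton_iff] at hω
  subst hω
  exact fun h => h0 (h 0 le_rfl)

end PathLaw

lemma measure_eq_mul_of_countable {α : Type*} [MeasurableSpace α] [MeasurableSingletonClass α]
    {μ ν : Measure α} {S : Set α} (hS : S.Countable) {c : ℝ≥0∞}
    (h : ∀ x ∈ S, ν {x} = c * μ {x}) : ν S = c * μ S := by
  have hsum : ∀ m : Measure α, ∑' x : S, m {x.1} = m S := fun m => by
    simpa using tsum_measure_preimage_singleton (μ := m) hS (f := id) fun _ _ =>
      measurableSet_singleton _
  rw [← hsum ν, ← hsum μ, ← ENNReal.tsum_mul_left]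
  exact tsum_congr fun x => h x x.2

lemma IsGW.measure_singleton_tilt {a c : Fin d → ℝ} (ha : ∀ i, 0 < a i) (hc : ∀ i, 0 ≤ c i)
    {p : Fin d → (Fin d → ℕ) → ℝ} {μ μbar : (Fin d → ℕ) → Measure (ℕ → Fin d → ℕ)}
    (hμ : IsGW p μ) (hμbar : IsGW (fun i => tilt a (c i) (p i)) μbar)
    (x : Fin d → ℕ) {n : Fin d → ℕ} {π : ℕ → Fin d → ℕ} (hπ : ∀ i, Ntot π i = n i) :
    μbar x {π} = ENNReal.ofReal (npow a n * npow c n / npow a x) * μ x {π} := by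
  by_cases h0 : π 0 = x
  swap
  · rw [hμbar.measure_singleton_of_ne h0, hμ.measure_singleton_of_ne h0, mul_zero]
  subst h0
  obtain ⟨M, hM, hsum⟩ := exists_sum_range_eq_of_Ntot_eq hπ
  have hshift : π 0 + ∑ j ∈ Finset.range M, π (j + 1) = n := by
    rw [add_comm, ← Finset.sum_range_succ', Finset.sum_range_succ, hsum, hM M le_rfl, add_zero]
  have hnonneg : 0 ≤ npow a n * npow c n / npow a (π 0) :=
    div_nonneg (mul_nonneg (npow_pos ha n).le (Finset.prod_nonneg fun i _ => pow_nonneg (hc i) _))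
      (npow_pos ha _).le
  rw [hμbar.measure_singleton hM, hμ.measure_singleton hM, prod_range_trans_tilt, hsum,
    ← ENNReal.ofReal_mul hnonneg, ← hshift, npow_add, npow_add]
  congr 1
  field_simp [(npow_pos ha (π 0)).ne']

/-- the GW process conditioned on total progeny `N = n` has the same
finite-dimensional distributions as the associated process conditioned on `N̄ = n`. -/
theorem cond_total_progeny_eq {d : ℕ} (p : Fin d → (Fin d → ℕ) → ℝ)
    (hp : ∀ i, IsPMF (p i))
    (a : Fin d → ℝ) (ha : ∀ i, 0 < a i)
    (hfa : ∀ i, Summable fun k => p i k * npow a k)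
    (pbar : Fin d → (Fin d → ℕ) → ℝ)
    (hpbar : ∀ i k, pbar i k = npow a k * p i k / (∑' k, p i k * npow a k))
    (μ μbar : (Fin d → ℕ) → Measure (ℕ → Fin d → ℕ))
    (hμ : IsGW p μ) (hμbar : IsGW pbar μbar) :
    ∀ (x0 : Fin d → ℕ) (m : ℕ) (ks : Fin m → ℕ), Monotone ks →
    ∀ (xs : Fin m → Fin d → ℕ) (n : Fin d → ℕ),
      μ x0 {ω | ∀ i, Ntot ω i = (n i : ℝ≥0∞)} ≠ 0 →
      μ x0 ({ω | ∀ t, ω (ks t) = xs t} ∩ {ω | ∀ i, Ntot ω i = (n i : ℝ≥0∞)}) /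
          μ x0 {ω | ∀ i, Ntot ω i = (n i : ℝ≥0∞)}
        = μbar x0 ({ω | ∀ t, ω (ks t) = xs t} ∩ {ω | ∀ i, Ntot ω i = (n i : ℝ≥0∞)}) /
            μbar x0 {ω | ∀ i, Ntot ω i = (n i : ℝ≥0∞)} := by
  intro x0 m ks _ xs n _
  set f : Fin d → ℝ := fun i => ∑' k, p i k * npow a k
  have hf : ∀ i, 0 < f i := fun i => (hp i).tsum_mul_npow_pos ha (hfa i)
  obtain rfl : pbar = fun i => tilt a (f i)⁻¹ (p i) := by
    funext i k
    rw [hpbar, div_eq_mul_inv]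
    rfl
  set c := npow a n * npow (fun i => (f i)⁻¹) n / npow a x0
  have hc : 0 < c := div_pos (mul_pos (npow_pos ha n) (npow_pos (fun i => inv_pos.mpr (hf i)) n))
    (npow_pos ha x0)
  have hscale : ∀ S ⊆ {ω | ∀ i, Ntot ω i = (n i : ℝ≥0∞)},
      μbar x0 S = ENNReal.ofReal c * μ x0 S := fun S hS =>
    measure_eq_mul_of_countable ((countable_setOf_Ntot_eq n).mono hS) fun π hπ =>
      hμ.measure_singleton_tilt ha (fun i => (inv_pos.mpr (hf i)).le) hμbar x0 (hS hπ)
  rw [hscale _ Set.inter_subset_right, hscale _ subset_rfl,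
    ENNReal.mul_div_mul_left _ _ (ENNReal.ofReal_pos.mpr hc).ne' ENNReal.ofReal_ne_top]

end GW
end
end

section
/- Let (X_k) be a subcritical positive regular nonsingular d-type GW process with Perron root ρ < 1 having finite second moments, u, v the normalized Perron eigenvectors, γ > 0 with lim_k ρ^{-k} P_x(X_k ≠ 0) = γ x·u, and g the generating function of the Yaglom limit ν. Then for every r ∈ [0,1]^d and all i,j: lim_{k→∞} ρ^{-k} ∂f_{k,j}(r)/∂r_i = γ u_j ∂g(r)/∂r_i. -/
/-!
Write `b_k(z) = ρ⁻ᵏ P_{e_j}(X_k = z)`. For `z ≠ 0`, `b_k(z) → γ u_j ν(z)`, as the product of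
the survival asymptotics and the Yaglom limit. The terms of the series
`Σ_z b_k(z) z_i r^{z - e_i}` are at most `|z| b_k(z)`, so the limit passes through the series
once `Σ_z b_k(z) |z|²` is bounded in `k`: the tails over `|z| ≥ A` are then at most `C / A`,
uniformly in `k`. That bound is a second-moment estimate for `W_k = X_k ⬝ u`: `E W_{k+1} = ρ E W_k`
and `E W_{k+1}² ≤ B E W_k + ρ² E W_k²`, hence `E W_k² = O(ρᵏ)` because `ρ < 1`. These moments are
computed along path sums of the one-step kernel, which dominate the marginals of `μ`.
-/

open MeasureTheory Filter Topology
open scoped ENNReal NNReal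

noncomputable section

namespace GW

variable {d : ℕ}

instance (k : Fin d → ℕ) : Finite {a : Fin d → ℕ // a ≤ k} := (Set.finite_Iic k).to_subtype

theorem tsum_antidiagonal_eq_tsum_tsum (F : (Fin d → ℕ) → (Fin d → ℕ) → ℝ≥0∞) :
    ∑' k, ∑' a : {a : Fin d → ℕ // a ≤ k}, F a (k - a) = ∑' a, ∑' b, F a b := by
  let e : (Σ k : Fin d → ℕ, {a : Fin d → ℕ // a ≤ k}) ≃ (Fin d → ℕ) × (Fin d → ℕ) :=
    { toFun := fun s => (s.2, s.1 - s.2)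
      invFun := fun ab => ⟨ab.1 + ab.2, ab.1, le_self_add⟩
      left_inv := by
        rintro ⟨k, a, ha⟩
        exact Sigma.subtype_ext (add_tsub_cancel_of_le ha) rfl
      right_inv := by
        rintro ⟨a, b⟩
        simp }
  rw [← ENNReal.tsum_sigma' fun s : Σ k : Fin d → ℕ, {a : Fin d → ℕ // a ≤ k} =>
      F s.2 (s.1 - s.2), ← ENNReal.tsum_prod]
  exact e.tsum_eq fun ab => F ab.1 ab.2

section Expectation

variable {p q : (Fin d → ℕ) → ℝ}

/-- Computed in `ℝ≥0∞`, so that moments need no summability side conditions. -/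
def expect (q : (Fin d → ℕ) → ℝ) (f : (Fin d → ℕ) → ℝ≥0∞) : ℝ≥0∞ :=
  ∑' z, ENNReal.ofReal (q z) * f z

theorem expect_add (q : (Fin d → ℕ) → ℝ) (f g : (Fin d → ℕ) → ℝ≥0∞) :
    expect q (fun z => f z + g z) = expect q f + expect q g := by
  simp only [expect, mul_add, ENNReal.tsum_add]

theorem expect_const_mul (q : (Fin d → ℕ) → ℝ) (c : ℝ≥0∞) (f : (Fin d → ℕ) → ℝ≥0∞) :
    expect q (fun z => c * f z) = c * expect q f := by
  simp only [expect, ← ENNReal.tsum_mul_left, mul_left_comm]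

theorem expect_mul_const (q : (Fin d → ℕ) → ℝ) (f : (Fin d → ℕ) → ℝ≥0∞) (c : ℝ≥0∞) :
    expect q (fun z => f z * c) = expect q f * c := by
  simp only [expect, ← ENNReal.tsum_mul_right, mul_assoc]

theorem expect_delta (f : (Fin d → ℕ) → ℝ≥0∞) : expect delta f = f 0 := by
  rw [expect, tsum_eq_single 0 fun z hz => by simp [delta, hz]]
  simp [delta]

theorem conv_nonneg (hp : ∀ z, 0 ≤ p z) (hq : ∀ z, 0 ≤ q z) (k : Fin d → ℕ) :
    0 ≤ conv p q k :=
  tsum_nonneg fun _ => mul_nonneg (hp _) (hq _)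

theorem ofReal_conv (hp : ∀ z, 0 ≤ p z) (hq : ∀ z, 0 ≤ q z) (k : Fin d → ℕ) :
    ENNReal.ofReal (conv p q k)
      = ∑' a : {a : Fin d → ℕ // a ≤ k}, ENNReal.ofReal (p a) * ENNReal.ofReal (q (k - a)) := by
  rw [conv, ENNReal.ofReal_tsum_of_nonneg (fun a => mul_nonneg (hp _) (hq _)) .of_finite]
  exact tsum_congr fun a => ENNReal.ofReal_mul (hp _)

theorem expect_conv (hp : ∀ z, 0 ≤ p z) (hq : ∀ z, 0 ≤ q z) (f : (Fin d → ℕ) → ℝ≥0∞) :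
    expect (conv p q) f = expect p fun a => expect q fun b => f (a + b) := by
  calc expect (conv p q) f
      = ∑' k, ∑' a : {a : Fin d → ℕ // a ≤ k},
          ENNReal.ofReal (p a) * (ENNReal.ofReal (q (k - a)) * f (a + (k - a))) := by
        refine tsum_congr fun k => ?_
        rw [ofReal_conv hp hq, ← ENNReal.tsum_mul_right]
        refine tsum_congr fun a => ?_
        rw [add_tsub_cancel_of_le a.2, mul_assoc]
    _ = ∑' a, ∑' b, ENNReal.ofReal (p a) * (ENNReal.ofReal (q b) * f (a + b)) :=
        tsum_antidiagonal_eq_tsum_tsum fun a b =>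
          ENNReal.ofReal (p a) * (ENNReal.ofReal (q b) * f (a + b))
    _ = _ := by simp only [expect, ENNReal.tsum_mul_left]

end Expectation

def dotU (u : Fin d → ℝ) (z : Fin d → ℕ) : ℝ≥0∞ := ∑ i, (z i : ℝ≥0∞) * ENNReal.ofReal (u i)

theorem dotU_add (u : Fin d → ℝ) (a b : Fin d → ℕ) : dotU u (a + b) = dotU u a + dotU u b := by
  simp only [dotU, Pi.add_apply, Nat.cast_add, add_mul, Finset.sum_add_distrib]

theorem dotU_zero (u : Fin d → ℝ) : dotU u 0 = 0 := by
  simp [dotU]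

theorem dotU_eq_ofReal {u : Fin d → ℝ} (hu : ∀ i, 0 ≤ u i) (z : Fin d → ℕ) :
    dotU u z = ENNReal.ofReal (∑ i, (z i : ℝ) * u i) := by
  rw [ENNReal.ofReal_sum_of_nonneg fun i _ => mul_nonneg (Nat.cast_nonneg _) (hu i)]
  simp only [dotU, ENNReal.ofReal_mul (Nat.cast_nonneg _), ENNReal.ofReal_natCast]

theorem sum_natCast_mul_ofReal_mul {u : Fin d → ℝ} {c : ℝ} (hc : 0 ≤ c) (y : Fin d → ℕ) :
    ∑ i, (y i : ℝ≥0∞) * ENNReal.ofReal (c * u i) = ENNReal.ofReal c * dotU u y := by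
  simp only [dotU, ENNReal.ofReal_mul hc, Finset.mul_sum, mul_left_comm]

structure MeanVarLE (u : Fin d → ℝ) (q : (Fin d → ℕ) → ℝ) (m c : ℝ≥0∞) : Prop where
  nonneg : ∀ z, 0 ≤ q z
  expect_one : expect q (fun _ => 1) = 1
  expect_dotU : expect q (dotU u) = m
  expect_dotU_sq_le : expect q (fun z => dotU u z ^ 2) ≤ c + m ^ 2

namespace MeanVarLE

variable {u : Fin d → ℝ} {p q : (Fin d → ℕ) → ℝ} {m m₁ m₂ c c₁ c₂ : ℝ≥0∞}

theorem expect_const (h : MeanVarLE u q m c) (a : ℝ≥0∞) : expect q (fun _ => a) = a := by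
  simpa [h.expect_one] using expect_const_mul q a fun _ => 1

theorem mono (h : MeanVarLE u q m c) {c' : ℝ≥0∞} (hc : c ≤ c') : MeanVarLE u q m c' :=
  ⟨h.nonneg, h.expect_one, h.expect_dotU, h.expect_dotU_sq_le.trans (by gcongr)⟩

protected theorem conv (h₁ : MeanVarLE u p m₁ c₁) (h₂ : MeanVarLE u q m₂ c₂) :
    MeanVarLE u (conv p q) (m₁ + m₂) (c₁ + c₂) where
  nonneg := conv_nonneg h₁.nonneg h₂.nonneg
  expect_one := by rw [expect_conv h₁.nonneg h₂.nonneg, h₂.expect_const, h₁.expect_one]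
  expect_dotU := by
    simp only [expect_conv h₁.nonneg h₂.nonneg, dotU_add, expect_add, h₂.expect_const,
      h₂.expect_dotU, h₁.expect_dotU, h₁.expect_const]
  expect_dotU_sq_le := by
    have hsq : expect (conv p q) (fun z => dotU u z ^ 2)
        = expect p (fun z => dotU u z ^ 2) + 2 * m₁ * m₂ + expect q (fun z => dotU u z ^ 2) := by
      simp only [expect_conv h₁.nonneg h₂.nonneg, dotU_add, add_sq, expect_add, h₂.expect_const,
        expect_const_mul, expect_mul_const, h₂.expect_dotU, h₁.expect_dotU, h₁.expect_const]
    calc expect (conv p q) (fun z => dotU u z ^ 2)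
        ≤ (c₁ + m₁ ^ 2) + 2 * m₁ * m₂ + (c₂ + m₂ ^ 2) := by
          rw [hsq]
          gcongr
          exacts [h₁.expect_dotU_sq_le, h₂.expect_dotU_sq_le]
      _ = (c₁ + c₂) + (m₁ + m₂) ^ 2 := by ring

theorem delta (u : Fin d → ℝ) : MeanVarLE u delta 0 0 where
  nonneg z := by unfold GW.delta; split_ifs <;> norm_num
  expect_one := expect_delta _
  expect_dotU := by rw [expect_delta, dotU_zero]
  expect_dotU_sq_le := by simp [expect_delta, dotU_zero]

protected theorem convIter (h : MeanVarLE u q m c) :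
    ∀ n : ℕ, MeanVarLE u (convIter q n) (n * m) (n * c)
  | 0 => by simpa [GW.convIter] using delta u
  | n + 1 => by
    rw [GW.convIter]
    convert h.conv (h.convIter n) using 1 <;> push_cast <;> ring

theorem foldr_conv_ofFn : ∀ {n : ℕ} {q : Fin n → (Fin d → ℕ) → ℝ} {m c : Fin n → ℝ≥0∞},
    (∀ i, MeanVarLE u (q i) (m i) (c i)) →
      MeanVarLE u ((List.ofFn q).foldr GW.conv GW.delta) (∑ i, m i) (∑ i, c i)
  | 0, _, _, _, _ => by simpa using delta u
  | _ + 1, _, _, _, h => by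
    rw [List.ofFn_succ, List.foldr_cons, Fin.sum_univ_succ, Fin.sum_univ_succ]
    exact (h 0).conv (foldr_conv_ofFn fun i => h i.succ)

protected theorem trans {p : Fin d → (Fin d → ℕ) → ℝ} {m c : Fin d → ℝ≥0∞}
    (h : ∀ i, MeanVarLE u (p i) (m i) (c i)) (y : Fin d → ℕ) :
    MeanVarLE u (trans p y) (∑ i, y i * m i) (∑ i, y i * c i) :=
  foldr_conv_ofFn fun i => (h i).convIter (y i)

end MeanVarLE

theorem natCast_le_sum (z : Fin d → ℕ) (j : Fin d) : (z j : ℝ) ≤ ∑ l, (z l : ℝ) :=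
  Finset.single_le_sum (fun l _ => Nat.cast_nonneg (z l)) (Finset.mem_univ j)

theorem sum_le_sq_sum (z : Fin d → ℕ) : ∑ l, (z l : ℝ) ≤ (∑ l, (z l : ℝ)) ^ 2 := by
  exact_mod_cast Nat.le_self_pow two_ne_zero (∑ l, z l)

section Offspring

variable {q : (Fin d → ℕ) → ℝ}

theorem summable_mul_coord (hq : ∀ z, 0 ≤ q z)
    (h2 : Summable fun z => q z * (∑ l, (z l : ℝ)) ^ 2) (j : Fin d) :
    Summable fun z => q z * z j :=
  h2.of_nonneg_of_le (fun z => mul_nonneg (hq z) (Nat.cast_nonneg _)) fun z =>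
    mul_le_mul_of_nonneg_left ((natCast_le_sum z j).trans (sum_le_sq_sum z)) (hq z)

theorem expect_dotU_eq_ofReal {u : Fin d → ℝ} (hu : ∀ j, 0 ≤ u j) (hq : ∀ z, 0 ≤ q z)
    (h2 : Summable fun z => q z * (∑ l, (z l : ℝ)) ^ 2) :
    expect q (dotU u) = ENNReal.ofReal (∑ j, (∑' z, q z * z j) * u j) := by
  have hmean : ∀ j, 0 ≤ ∑' z, q z * z j :=
    fun j => tsum_nonneg fun z => mul_nonneg (hq z) (Nat.cast_nonneg _)
  rw [ENNReal.ofReal_sum_of_nonneg fun j _ => mul_nonneg (hmean j) (hu j)]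
  simp only [ENNReal.ofReal_mul (hmean _), ENNReal.ofReal_tsum_of_nonneg
    (fun z => mul_nonneg (hq z) (Nat.cast_nonneg _)) (summable_mul_coord hq h2 _),
    ENNReal.ofReal_mul (hq _), ENNReal.ofReal_natCast, expect, dotU, Finset.mul_sum,
    ← ENNReal.tsum_mul_right, mul_assoc]
  exact Summable.tsum_finsetSum fun _ _ => ENNReal.summable

theorem expect_dotU_sq_ne_top (u : Fin d → ℝ) (hq : ∀ z, 0 ≤ q z)
    (h2 : Summable fun z => q z * (∑ l, (z l : ℝ)) ^ 2) :
    expect q (fun z => dotU u z ^ 2) ≠ ⊤ := by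
  set U : ℝ≥0∞ := ∑ l, ENNReal.ofReal (u l)
  have hdot : ∀ z, dotU u z ^ 2 ≤ U ^ 2 * ENNReal.ofReal ((∑ l, (z l : ℝ)) ^ 2) := by
    intro z
    have hz : ∀ i, (z i : ℝ≥0∞) ≤ ENNReal.ofReal (∑ l, (z l : ℝ)) := fun i => by
      rw [← ENNReal.ofReal_natCast]
      exact ENNReal.ofReal_le_ofReal (natCast_le_sum z i)
    rw [ENNReal.ofReal_pow (Finset.sum_nonneg fun l _ => Nat.cast_nonneg _), ← mul_pow]
    gcongr
    calc dotU u z ≤ ∑ i, ENNReal.ofReal (∑ l, (z l : ℝ)) * ENNReal.ofReal (u i) :=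
          Finset.sum_le_sum fun i _ => by gcongr; exact hz i
      _ = U * ENNReal.ofReal (∑ l, (z l : ℝ)) := by rw [← Finset.mul_sum, mul_comm]
  refine ne_top_of_le_ne_top (b := U ^ 2 * expect q fun z => ENNReal.ofReal ((∑ l, (z l : ℝ)) ^ 2))
    (ENNReal.mul_ne_top (by simp [U]) ?_) ?_
  · rw [expect]
    simp only [← ENNReal.ofReal_mul (hq _)]
    rw [← ENNReal.ofReal_tsum_of_nonneg (fun z => mul_nonneg (hq z) (sq_nonneg _)) h2]
    exact ENNReal.ofReal_ne_top
  · rw [← expect_const_mul]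
    exact ENNReal.tsum_le_tsum fun z => by gcongr; exact hdot z

theorem expect_one_of_isPMF (hq : IsPMF q) : expect q (fun _ => 1) = 1 := by
  simp only [expect, mul_one]
  rw [← ENNReal.ofReal_tsum_of_nonneg hq.nonneg hq.hasSum.summable, hq.hasSum.tsum_eq,
    ENNReal.ofReal_one]

end Offspring

theorem exists_offspring_meanVarLE {p : Fin d → (Fin d → ℕ) → ℝ} (hp : ∀ i, IsPMF (p i))
    (hmom2 : ∀ i, Summable fun k => p i k * (∑ j, (k j : ℝ)) ^ 2)
    {M : Matrix (Fin d) (Fin d) ℝ} (hMdef : ∀ i j, M i j = ∑' k, p i k * (k j : ℝ))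
    {ρ : ℝ} {u : Fin d → ℝ} (hu : ∀ i, 0 < u i) (hMu : M.mulVec u = ρ • u) :
    ∃ B : ℝ, 0 ≤ B ∧ ∀ i, MeanVarLE u (p i) (ENNReal.ofReal (ρ * u i))
      (ENNReal.ofReal (B * u i)) := by
  set c : Fin d → ℝ≥0∞ := fun i => expect (p i) fun z => dotU u z ^ 2
  have hc : ∀ i, c i ≠ ⊤ := fun i => expect_dotU_sq_ne_top u (hp i).nonneg (hmom2 i)
  have hcu : ∀ i, 0 ≤ (c i).toReal / u i := fun i => div_nonneg ENNReal.toReal_nonneg (hu i).le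
  refine ⟨∑ i, (c i).toReal / u i, Finset.sum_nonneg fun i _ => hcu i, fun i => ?_⟩
  refine MeanVarLE.mono (c := c i) ⟨(hp i).nonneg, expect_one_of_isPMF (hp i), ?_, le_self_add⟩ ?_
  · rw [expect_dotU_eq_ofReal (fun j => (hu j).le) (hp i).nonneg (hmom2 i)]
    have hi := congrFun hMu i
    simp only [Matrix.mulVec, dotProduct, hMdef, Pi.smul_apply, smul_eq_mul] at hi
    rw [hi]
  · rw [← ENNReal.ofReal_toReal (hc i)]
    refine ENNReal.ofReal_le_ofReal ?_
    calc (c i).toReal = (c i).toReal / u i * u i := (div_mul_cancel₀ _ (hu i).ne').symm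
      _ ≤ _ := mul_le_mul_of_nonneg_right (Finset.single_le_sum (f := fun i => (c i).toReal / u i)
          (fun j _ => hcu j) (Finset.mem_univ i)) (hu i).le

theorem meanVarLE_trans_of_offspring {p : Fin d → (Fin d → ℕ) → ℝ} {u : Fin d → ℝ} {ρ B : ℝ}
    (hρ : 0 ≤ ρ) (hB : 0 ≤ B)
    (h : ∀ i, MeanVarLE u (p i) (ENNReal.ofReal (ρ * u i)) (ENNReal.ofReal (B * u i)))
    (y : Fin d → ℕ) :
    MeanVarLE u (trans p y) (ENNReal.ofReal ρ * dotU u y) (ENNReal.ofReal B * dotU u y) := by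
  simpa only [sum_natCast_mul_ofReal_mul hρ, sum_natCast_mul_ofReal_mul hB] using
    MeanVarLE.trans h y

section PathSum

variable {p : Fin d → (Fin d → ℕ) → ℝ}

def pathSum (p : Fin d → (Fin d → ℕ) → ℝ) (x : Fin d → ℕ) (k : ℕ) (z : Fin d → ℕ) : ℝ≥0∞ :=
  ∑' xs : {xs : Fin (k + 1) → Fin d → ℕ // xs 0 = x ∧ xs (Fin.last k) = z},
    ENNReal.ofReal (∏ t : Fin k, trans p (xs.1 t.castSucc) (xs.1 t.succ))

theorem pathSum_zero (x z : Fin d → ℕ) : pathSum p x 0 z = if z = x then 1 else 0 := by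
  split_ifs with hz
  · subst hz
    rw [pathSum, tsum_eq_single ⟨fun _ => z, rfl, rfl⟩]
    · simp
    · intro xs hxs
      exact absurd (Subtype.ext (funext fun t => by rw [Fin.fin_one_eq_zero t, xs.2.1])) hxs
  · rw [pathSum, ENNReal.tsum_eq_zero]
    rintro ⟨xs, h0, h1⟩
    exact absurd (h1.symm.trans h0) hz

theorem prod_trans_snoc {k : ℕ} (xs : Fin (k + 1) → Fin d → ℕ) (z : Fin d → ℕ) :
    ∏ t : Fin (k + 1), trans p ((Fin.snoc xs z : Fin (k + 2) → Fin d → ℕ) t.castSucc)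
        ((Fin.snoc xs z : Fin (k + 2) → Fin d → ℕ) t.succ)
      = (∏ t : Fin k, trans p (xs t.castSucc) (xs t.succ)) * trans p (xs (Fin.last k)) z := by
  rw [Fin.prod_univ_castSucc]
  simp only [Fin.succ_castSucc, Fin.snoc_castSucc, Fin.succ_last, Fin.snoc_last]

def snocPathEquiv (x : Fin d → ℕ) (k : ℕ) (z : Fin d → ℕ) :
    (Σ y : Fin d → ℕ, {xs : Fin (k + 1) → Fin d → ℕ // xs 0 = x ∧ xs (Fin.last k) = y})
      ≃ {xs : Fin (k + 2) → Fin d → ℕ // xs 0 = x ∧ xs (Fin.last (k + 1)) = z} where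
  toFun s := ⟨Fin.snoc s.2.1 z, by
    refine ⟨?_, Fin.snoc_last _ _⟩
    simpa using (Fin.snoc_castSucc (α := fun _ => Fin d → ℕ) (p := s.2.1) z 0).trans s.2.2.1⟩
  invFun xs := ⟨xs.1 (Fin.last k).castSucc, Fin.init xs.1, by
    rw [Fin.init, Fin.castSucc_zero]
    exact ⟨xs.2.1, rfl⟩⟩
  left_inv := by
    rintro ⟨y, xs, h0, h1⟩
    exact Sigma.subtype_ext (by simp [h1]) (by simp)
  right_inv := by
    rintro ⟨xs, h0, h1⟩
    exact Subtype.ext ((congrArg (Fin.snoc (Fin.init xs)) h1.symm).trans (Fin.snoc_init_self xs))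

theorem pathSum_succ (htrans : ∀ y z, 0 ≤ trans p y z) (x : Fin d → ℕ) (k : ℕ)
    (z : Fin d → ℕ) :
    pathSum p x (k + 1) z = ∑' y, pathSum p x k y * ENNReal.ofReal (trans p y z) := by
  rw [pathSum, ← (snocPathEquiv x k z).tsum_eq, ENNReal.tsum_sigma']
  refine tsum_congr fun y => ?_
  rw [pathSum, ← ENNReal.tsum_mul_right]
  refine tsum_congr fun xs => ?_
  simp only [snocPathEquiv, Equiv.coe_fn_mk]
  rw [prod_trans_snoc, xs.2.2,
    ENNReal.ofReal_mul (Finset.prod_nonneg fun t _ => htrans _ _)]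

theorem tsum_pathSum_zero_mul (x : Fin d → ℕ) (f : (Fin d → ℕ) → ℝ≥0∞) :
    ∑' z, pathSum p x 0 z * f z = f x := by
  rw [tsum_eq_single x fun z hz => by simp [pathSum_zero, hz]]
  simp [pathSum_zero]

theorem tsum_pathSum_succ_mul (htrans : ∀ y z, 0 ≤ trans p y z) (x : Fin d → ℕ) (k : ℕ)
    (f : (Fin d → ℕ) → ℝ≥0∞) :
    ∑' z, pathSum p x (k + 1) z * f z = ∑' y, pathSum p x k y * expect (trans p y) f := by
  simp only [pathSum_succ htrans, ← ENNReal.tsum_mul_right]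
  rw [ENNReal.tsum_comm]
  simp only [expect, ← ENNReal.tsum_mul_left, mul_assoc]

theorem measure_eval_zero_ne_eq_zero {μ : (Fin d → ℕ) → Measure (ℕ → Fin d → ℕ)}
    (hμ : IsGW p μ) (x : Fin d → ℕ) : μ x {ω | ω 0 ≠ x} = 0 := by
  have := hμ.1 x
  refine (prob_compl_eq_zero_iff (s := {ω : ℕ → Fin d → ℕ | ω 0 = x})
    (measurableSet_eq_fun (measurable_pi_apply 0) measurable_const)).2 ?_
  simpa using hμ.2 x 0 (fun _ => x) rfl

/-- The cylinder events of a path cover the event `{ω k = z}` up to a null set. -/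
theorem measure_eval_eq_le_pathSum {μ : (Fin d → ℕ) → Measure (ℕ → Fin d → ℕ)}
    (hμ : IsGW p μ) (x : Fin d → ℕ) (k : ℕ) (z : Fin d → ℕ) :
    μ x {ω | ω k = z} ≤ pathSum p x k z := by
  set S := {xs : Fin (k + 1) → Fin d → ℕ // xs 0 = x ∧ xs (Fin.last k) = z}
  let ext : S → ℕ → Fin d → ℕ := fun xs t => if h : t < k + 1 then xs.1 ⟨t, h⟩ else z
  have hsub : {ω : ℕ → Fin d → ℕ | ω k = z}
      ⊆ {ω | ω 0 ≠ x} ∪ ⋃ xs : S, {ω | ∀ j ≤ k, ω j = ext xs j} := by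
    intro ω hω
    by_cases hx : ω 0 = x
    · refine Or.inr (Set.mem_iUnion.2 ⟨⟨fun t => ω t, hx, hω⟩, fun j hj => ?_⟩)
      simp only [ext, dif_pos (Nat.lt_succ_of_le hj)]
    · exact Or.inl hx
  have hcyl : ∀ xs : S, μ x {ω | ∀ j ≤ k, ω j = ext xs j}
      = ENNReal.ofReal (∏ t : Fin k, trans p (xs.1 t.castSucc) (xs.1 t.succ)) := by
    intro xs
    rw [hμ.2 x k (ext xs) (by simp [ext, xs.2.1]), ← Fin.prod_univ_eq_prod_range]
    congr 1
    refine Finset.prod_congr rfl fun t _ => ?_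
    simp only [ext, dif_pos (Nat.lt_succ_of_lt t.2), dif_pos (Nat.succ_lt_succ t.2)]
    rfl
  calc μ x {ω | ω k = z}
      ≤ μ x {ω | ω 0 ≠ x} + ∑' xs : S, μ x {ω | ∀ j ≤ k, ω j = ext xs j} :=
        (measure_mono hsub).trans <| (measure_union_le _ _).trans <|
          add_le_add le_rfl (measure_iUnion_le _)
    _ = pathSum p x k z := by
        rw [measure_eval_zero_ne_eq_zero hμ, zero_add, pathSum]
        exact tsum_congr hcyl

end PathSum

section Moments

variable {p : Fin d → (Fin d → ℕ) → ℝ} {u : Fin d → ℝ}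

theorem tsum_pathSum_mul_dotU (htrans : ∀ y z, 0 ≤ trans p y z) {r : ℝ≥0∞}
    (hmean : ∀ y, expect (trans p y) (dotU u) = r * dotU u y) (x : Fin d → ℕ) :
    ∀ k, ∑' z, pathSum p x k z * dotU u z = r ^ k * dotU u x
  | 0 => by rw [tsum_pathSum_zero_mul, pow_zero, one_mul]
  | k + 1 => by
    simp only [tsum_pathSum_succ_mul htrans, hmean, mul_left_comm _ r, ENNReal.tsum_mul_left,
      tsum_pathSum_mul_dotU htrans hmean x k, pow_succ', mul_assoc]

theorem tsum_pathSum_mul_dotU_sq_le (htrans : ∀ y z, 0 ≤ trans p y z) {r b A : ℝ≥0∞}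
    (hmean : ∀ y, expect (trans p y) (dotU u) = r * dotU u y)
    (hsq : ∀ y, expect (trans p y) (fun z => dotU u z ^ 2) ≤ b * dotU u y + r ^ 2 * dotU u y ^ 2)
    (x : Fin d → ℕ) (hA₀ : dotU u x ^ 2 ≤ A) (hA : b * dotU u x + r ^ 2 * A ≤ A * r) :
    ∀ k, ∑' z, pathSum p x k z * dotU u z ^ 2 ≤ A * r ^ k
  | 0 => by rw [tsum_pathSum_zero_mul, pow_zero, mul_one]; exact hA₀
  | k + 1 => by
    calc ∑' z, pathSum p x (k + 1) z * dotU u z ^ 2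
        ≤ ∑' y, pathSum p x k y * (b * dotU u y + r ^ 2 * dotU u y ^ 2) := by
          rw [tsum_pathSum_succ_mul htrans]
          exact ENNReal.tsum_le_tsum fun y => by gcongr; exact hsq y
      _ = b * (r ^ k * dotU u x) + r ^ 2 * ∑' y, pathSum p x k y * dotU u y ^ 2 := by
          simp only [mul_add, ENNReal.tsum_add, mul_left_comm _ b, mul_left_comm _ (r ^ 2),
            ENNReal.tsum_mul_left, tsum_pathSum_mul_dotU htrans hmean x k]
      _ ≤ b * (r ^ k * dotU u x) + r ^ 2 * (A * r ^ k) := by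
          gcongr
          exact tsum_pathSum_mul_dotU_sq_le htrans hmean hsq x hA₀ hA k
      _ = (b * dotU u x + r ^ 2 * A) * r ^ k := by ring
      _ ≤ A * r * r ^ k := by gcongr
      _ = A * r ^ (k + 1) := by ring

theorem exists_le_and_add_sq_mul_le {ρ : ℝ} (hρ0 : 0 < ρ) (hρ1 : ρ < 1) (a b : ℝ) :
    ∃ A, a ≤ A ∧ b + ρ ^ 2 * A ≤ A * ρ := by
  refine ⟨max a (b / (ρ * (1 - ρ))), le_max_left _ _, ?_⟩
  have hgap : 0 < ρ * (1 - ρ) := mul_pos hρ0 (by linarith)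
  have hb := (div_le_iff₀ hgap).1 (le_max_right a (b / (ρ * (1 - ρ))))
  nlinarith

theorem sum_le_sum_inv_mul_sum_mul (hu : ∀ l, 0 < u l) (z : Fin d → ℕ) :
    ∑ l, (z l : ℝ) ≤ (∑ l, (u l)⁻¹) * ∑ l, (z l : ℝ) * u l := by
  rw [Finset.mul_sum]
  refine Finset.sum_le_sum fun l _ => ?_
  calc (z l : ℝ) = (u l)⁻¹ * ((z l : ℝ) * u l) := by field_simp [(hu l).ne']
    _ ≤ (∑ l, (u l)⁻¹) * ((z l : ℝ) * u l) := by
        gcongr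
        · exact mul_nonneg (Nat.cast_nonneg _) (hu l).le
        · exact Finset.single_le_sum (f := fun l => (u l)⁻¹) (fun l _ => (inv_pos.2 (hu l)).le)
            (Finset.mem_univ l)

theorem ofReal_sq_sum_le_mul_dotU_sq (hu : ∀ l, 0 < u l) (z : Fin d → ℕ) :
    ENNReal.ofReal ((∑ l, (z l : ℝ)) ^ 2)
      ≤ ENNReal.ofReal ((∑ l, (u l)⁻¹) ^ 2) * dotU u z ^ 2 := by
  have hu0 : ∀ i, 0 ≤ u i := fun i => (hu i).le
  have hz : 0 ≤ ∑ i, (z i : ℝ) * u i :=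
    Finset.sum_nonneg fun i _ => mul_nonneg (Nat.cast_nonneg _) (hu0 i)
  rw [dotU_eq_ofReal hu0, ← ENNReal.ofReal_pow hz, ← ENNReal.ofReal_mul (sq_nonneg _),
    ← mul_pow]
  exact ENNReal.ofReal_le_ofReal (pow_le_pow_left₀ (Finset.sum_nonneg fun l _ =>
    Nat.cast_nonneg _) (sum_le_sum_inv_mul_sum_mul hu z) 2)

end Moments

theorem exists_tsum_pathSum_mul_dotU_sq_le {p : Fin d → (Fin d → ℕ) → ℝ}
    (hp : ∀ i, IsPMF (p i)) (hmom2 : ∀ i, Summable fun k => p i k * (∑ j, (k j : ℝ)) ^ 2)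
    {M : Matrix (Fin d) (Fin d) ℝ} (hMdef : ∀ i j, M i j = ∑' k, p i k * (k j : ℝ))
    {ρ : ℝ} (hρ0 : 0 < ρ) (hsub : ρ < 1)
    {u : Fin d → ℝ} (hu : ∀ i, 0 < u i) (hMu : M.mulVec u = ρ • u) (x : Fin d → ℕ) :
    ∃ A : ℝ, 0 ≤ A ∧ ∀ k, ∑' z, pathSum p x k z * dotU u z ^ 2 ≤ ENNReal.ofReal (A * ρ ^ k) := by
  have hu0 : ∀ i, 0 ≤ u i := fun i => (hu i).le
  obtain ⟨B, hB, hoff⟩ := exists_offspring_meanVarLE hp hmom2 hMdef hu hMu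
  have htr := meanVarLE_trans_of_offspring hρ0.le hB hoff
  set X : ℝ := ∑ i, (x i : ℝ) * u i
  have hX : 0 ≤ X := Finset.sum_nonneg fun i _ => mul_nonneg (Nat.cast_nonneg _) (hu0 i)
  obtain ⟨A, hXA, hA⟩ := exists_le_and_add_sq_mul_le hρ0 hsub (X ^ 2) (B * X)
  have hA0 : 0 ≤ A := (sq_nonneg X).trans hXA
  refine ⟨A, hA0, fun k => ?_⟩
  rw [ENNReal.ofReal_mul hA0, ENNReal.ofReal_pow hρ0.le]
  refine tsum_pathSum_mul_dotU_sq_le (fun y => (htr y).nonneg) (fun y => (htr y).expect_dotU)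
    (fun y => (htr y).expect_dotU_sq_le.trans_eq (by ring)) x ?_ ?_ k
  · rw [dotU_eq_ofReal hu0, ← ENNReal.ofReal_pow hX]
    exact ENNReal.ofReal_le_ofReal hXA
  · rw [dotU_eq_ofReal hu0, ← ENNReal.ofReal_mul hB, ← ENNReal.ofReal_pow hρ0.le,
      ← ENNReal.ofReal_mul (sq_nonneg ρ), ← ENNReal.ofReal_add (by positivity)
        (by positivity), ← ENNReal.ofReal_mul hA0]
    exact ENNReal.ofReal_le_ofReal hA

theorem exists_sum_measure_mul_sq_le {p : Fin d → (Fin d → ℕ) → ℝ} (hp : ∀ i, IsPMF (p i))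
    {μ : (Fin d → ℕ) → Measure (ℕ → Fin d → ℕ)} (hμ : IsGW p μ)
    (hmom2 : ∀ i, Summable fun k => p i k * (∑ j, (k j : ℝ)) ^ 2)
    {M : Matrix (Fin d) (Fin d) ℝ} (hMdef : ∀ i j, M i j = ∑' k, p i k * (k j : ℝ))
    {ρ : ℝ} (hρ0 : 0 < ρ) (hsub : ρ < 1)
    {u : Fin d → ℝ} (hu : ∀ i, 0 < u i) (hMu : M.mulVec u = ρ • u) (x : Fin d → ℕ) :
    ∃ C : ℝ, ∀ (k : ℕ) (s : Finset (Fin d → ℕ)),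
      ∑ z ∈ s, (ρ ^ k)⁻¹ * (μ x {ω | ω k = z}).toReal * (∑ l, (z l : ℝ)) ^ 2 ≤ C := by
  obtain ⟨A, hA0, hW⟩ := exists_tsum_pathSum_mul_dotU_sq_le hp hmom2 hMdef hρ0 hsub hu hMu x
  set κ : ℝ := ∑ l, (u l)⁻¹
  refine ⟨κ ^ 2 * A, fun k s => ?_⟩
  have hENN : ∑ z ∈ s, μ x {ω | ω k = z} * ENNReal.ofReal ((∑ l, (z l : ℝ)) ^ 2)
      ≤ ENNReal.ofReal (κ ^ 2 * A * ρ ^ k) :=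
    calc ∑ z ∈ s, μ x {ω | ω k = z} * ENNReal.ofReal ((∑ l, (z l : ℝ)) ^ 2)
        ≤ ∑ z ∈ s, ENNReal.ofReal (κ ^ 2) * (pathSum p x k z * dotU u z ^ 2) :=
          Finset.sum_le_sum fun z _ => by
            rw [mul_left_comm]
            exact mul_le_mul' (measure_eval_eq_le_pathSum hμ x k z)
              (ofReal_sq_sum_le_mul_dotU_sq hu z)
      _ ≤ ENNReal.ofReal (κ ^ 2) * ENNReal.ofReal (A * ρ ^ k) := by
          rw [← Finset.mul_sum]
          exact mul_le_mul_right ((ENNReal.sum_le_tsum s).trans (hW k)) _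
      _ = ENNReal.ofReal (κ ^ 2 * A * ρ ^ k) := by
          rw [← ENNReal.ofReal_mul (sq_nonneg κ), mul_assoc]
  have := hμ.1 x
  have hreal := ENNReal.toReal_le_of_le_ofReal (by positivity) hENN
  rw [ENNReal.toReal_sum fun z _ => ENNReal.mul_ne_top (measure_ne_top _ _) ENNReal.ofReal_ne_top]
    at hreal
  simp only [ENNReal.toReal_mul, ENNReal.toReal_ofReal (sq_nonneg _)] at hreal
  calc ∑ z ∈ s, (ρ ^ k)⁻¹ * (μ x {ω | ω k = z}).toReal * (∑ l, (z l : ℝ)) ^ 2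
      = (ρ ^ k)⁻¹ * ∑ z ∈ s, (μ x {ω | ω k = z}).toReal * (∑ l, (z l : ℝ)) ^ 2 := by
        simp only [mul_assoc, Finset.mul_sum]
    _ ≤ (ρ ^ k)⁻¹ * (κ ^ 2 * A * ρ ^ k) := by gcongr
    _ = κ ^ 2 * A := by field_simp

section UniformTail

variable {α : Type*}

theorem sum_le_sum_add_of_disjoint_sum_le {f : α → ℝ} (hf : ∀ z, 0 ≤ f z) {F : Finset α}
    {ε : ℝ} (h : ∀ s, Disjoint s F → ∑ z ∈ s, f z ≤ ε) (s : Finset α) :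
    ∑ z ∈ s, f z ≤ ∑ z ∈ F, f z + ε := by
  classical
  rw [← Finset.sum_inter_add_sum_sdiff s F]
  exact add_le_add (Finset.sum_le_sum_of_subset_of_nonneg Finset.inter_subset_right
    fun z _ _ => hf z) (h _ Finset.sdiff_disjoint)

theorem abs_tsum_sub_sum_le_of_disjoint_sum_le {f : α → ℝ} (hf : ∀ z, 0 ≤ f z)
    {F : Finset α} {ε : ℝ} (h : ∀ s, Disjoint s F → ∑ z ∈ s, f z ≤ ε) :
    |∑' z, f z - ∑ z ∈ F, f z| ≤ ε := by
  have hle := sum_le_sum_add_of_disjoint_sum_le hf h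
  have hsum : Summable f := summable_of_sum_le hf hle
  rw [abs_of_nonneg (sub_nonneg.2 (hsum.sum_le_tsum F fun z _ => hf z))]
  linarith [hsum.tsum_le_of_sum_le hle]

theorem tendsto_tsum_of_tendsto_of_uniform_tail {g : ℕ → α → ℝ} {G : α → ℝ}
    (hg : ∀ k z, 0 ≤ g k z) (hlim : ∀ z, Tendsto (fun k => g k z) atTop (𝓝 (G z)))
    (htail : ∀ ε > 0, ∃ F : Finset α, ∀ k s, Disjoint s F → ∑ z ∈ s, g k z ≤ ε) :
    Tendsto (fun k => ∑' z, g k z) atTop (𝓝 (∑' z, G z)) := by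
  rw [Metric.tendsto_atTop]
  intro ε hε
  obtain ⟨F, hF⟩ := htail (ε / 3) (by positivity)
  have hGF : ∀ s, Disjoint s F → ∑ z ∈ s, G z ≤ ε / 3 := fun s hs =>
    le_of_tendsto' (tendsto_finsetSum s fun z _ => hlim z) fun k => hF k s hs
  have hG := abs_tsum_sub_sum_le_of_disjoint_sum_le
    (fun z => ge_of_tendsto' (hlim z) fun k => hg k z) hGF
  obtain ⟨N, hN⟩ := Metric.tendsto_atTop.1 (tendsto_finsetSum F fun z _ => hlim z) (ε / 3)
    (by positivity)
  refine ⟨N, fun k hk => ?_⟩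
  have hgk := abs_tsum_sub_sum_le_of_disjoint_sum_le (hg k) (hF k)
  have hfin := hN k hk
  rw [Real.dist_eq] at hfin ⊢
  rw [abs_le] at hG hgk
  rw [abs_lt] at hfin ⊢
  constructor <;> linarith

/-- Since `w = o(S)`, the bound on `∑ b k z * S z` makes the tails of `∑ b k z * w z`
uniformly small. -/
theorem tendsto_tsum_mul_of_sum_mul_le {b : ℕ → α → ℝ} {w S G : α → ℝ} {C : ℝ}
    (hb : ∀ k z, 0 ≤ b k z) (hw : ∀ z, 0 ≤ w z)
    (hlim : ∀ z, Tendsto (fun k => b k z * w z) atTop (𝓝 (G z)))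
    (hC : ∀ k s, ∑ z ∈ s, b k z * S z ≤ C)
    (hwS : ∀ A > 0, ∃ F : Finset α, ∀ z ∉ F, A * w z ≤ S z) :
    Tendsto (fun k => ∑' z, b k z * w z) atTop (𝓝 (∑' z, G z)) := by
  refine tendsto_tsum_of_tendsto_of_uniform_tail (fun k z => mul_nonneg (hb k z) (hw z)) hlim
    fun ε hε => ?_
  have hC0 : 0 ≤ C := by simpa using hC 0 ∅
  have hA : 0 < C / ε + 1 := by positivity
  obtain ⟨F, hF⟩ := hwS (C / ε + 1) hA
  refine ⟨F, fun k s hs => ?_⟩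
  calc ∑ z ∈ s, b k z * w z ≤ ∑ z ∈ s, b k z * S z / (C / ε + 1) :=
        Finset.sum_le_sum fun z hz => by
          rw [le_div_iff₀ hA, mul_assoc, mul_comm (w z)]
          exact mul_le_mul_of_nonneg_left (hF z (Finset.disjoint_left.1 hs hz)) (hb k z)
    _ = (∑ z ∈ s, b k z * S z) / (C / ε + 1) := (Finset.sum_div _ _ _).symm
    _ ≤ C / (C / ε + 1) := by gcongr; exact hC k s
    _ ≤ ε := by
        rw [div_le_iff₀ hA, mul_add, mul_div_cancel₀ _ hε.ne', mul_one]
        linarith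

end UniformTail

theorem exists_finset_forall_notMem_mul_le_sq_sum {A : ℝ} (hA : 0 ≤ A) :
    ∃ F : Finset (Fin d → ℕ), ∀ z ∉ F, A * ∑ l, (z l : ℝ) ≤ (∑ l, (z l : ℝ)) ^ 2 := by
  refine ⟨Fintype.piFinset fun _ => Finset.range ⌈A⌉₊, fun z hz => ?_⟩
  obtain ⟨l, hl⟩ : ∃ l, ⌈A⌉₊ ≤ z l := by simpa [Fintype.mem_piFinset] using hz
  have hAz : A ≤ ∑ l, (z l : ℝ) :=
    calc A ≤ ⌈A⌉₊ := Nat.le_ceil A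
      _ ≤ z l := by exact_mod_cast hl
      _ ≤ _ := natCast_le_sum z l
  rw [sq]
  exact mul_le_mul_of_nonneg_right hAz (hA.trans hAz)

theorem npow_nonneg {r : Fin d → ℝ} (hr0 : ∀ i, 0 ≤ r i) (y : Fin d → ℕ) : 0 ≤ npow r y :=
  Finset.prod_nonneg fun l _ => pow_nonneg (hr0 l) _

theorem npow_le_one {r : Fin d → ℝ} (hr0 : ∀ i, 0 ≤ r i) (hr1 : ∀ i, r i ≤ 1)
    (y : Fin d → ℕ) : npow r y ≤ 1 :=
  Finset.prod_le_one (fun l _ => pow_nonneg (hr0 l) _) fun l _ => pow_le_one₀ (hr0 l) (hr1 l)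

theorem natCast_mul_npow_le_sum {r : Fin d → ℝ} (hr0 : ∀ i, 0 ≤ r i) (hr1 : ∀ i, r i ≤ 1)
    (z y : Fin d → ℕ) (i : Fin d) : (z i : ℝ) * npow r y ≤ ∑ l, (z l : ℝ) :=
  (mul_le_of_le_one_right (Nat.cast_nonneg _) (npow_le_one hr0 hr1 y)).trans (natCast_le_sum z i)

theorem tendsto_mul_measure_eval_eq {P : Measure (ℕ → Fin d → ℕ)} [IsFiniteMeasure P]
    {c : ℕ → ℝ} {a b : ℝ} {z : Fin d → ℕ} (hz : z ≠ 0)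
    (hsurv : Tendsto (fun k => c k * (P {ω | ω k ≠ 0}).toReal) atTop (𝓝 a))
    (hcond : Tendsto (fun k => (P {ω | ω k = z}).toReal / (P {ω | ω k ≠ 0}).toReal) atTop
      (𝓝 b)) :
    Tendsto (fun k => c k * (P {ω | ω k = z}).toReal) atTop (𝓝 (a * b)) := by
  refine (hsurv.mul hcond).congr fun k => ?_
  by_cases h0 : (P {ω | ω k ≠ 0}).toReal = 0
  · have hle : (P {ω | ω k = z}).toReal ≤ (P {ω | ω k ≠ 0}).toReal :=
      ENNReal.toReal_mono (measure_ne_top _ _)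
        (measure_mono fun ω (hω : ω k = z) => show ω k ≠ 0 from hω ▸ hz)
    rw [h0, le_antisymm (h0 ▸ hle) ENNReal.toReal_nonneg]
    simp
  · field_simp

/-- The partial derivatives are the termwise derivatives of the power series,
`∂f_{k,j}(r)/∂r_i = Σ_z P_k(e_j, z) z_i r^{z − e_i}` and `∂g(r)/∂r_i = Σ_z ν(z) z_i r^{z − e_i}`;
the truncated `z - e_i` only occurs in terms with the factor `z_i = 0`. -/
theorem deriv_iterate_limit_general {d : ℕ} (p : Fin d → (Fin d → ℕ) → ℝ)
    (hp : ∀ i, IsPMF (p i))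
    (μ : (Fin d → ℕ) → Measure (ℕ → Fin d → ℕ)) (hμ : IsGW p μ)
    (hmom2 : ∀ i, Summable fun k => p i k * (∑ j, (k j : ℝ)) ^ 2)
    (M : Matrix (Fin d) (Fin d) ℝ) (hMdef : ∀ i j, M i j = ∑' k, p i k * (k j : ℝ))
    (ρ : ℝ) (hρ0 : 0 < ρ) (hsub : ρ < 1)
    (u : Fin d → ℝ) (hu : ∀ i, 0 < u i)
    (hMu : M.mulVec u = ρ • u)
    (γ : ℝ)
    (hgam : ∀ x : Fin d → ℕ, x ≠ 0 →
      Tendsto (fun k => (ρ ^ k)⁻¹ * (μ x {ω | ω k ≠ 0}).toReal) atTop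
        (nhds (γ * ∑ i, (x i : ℝ) * u i)))
    (ν : (Fin d → ℕ) → ℝ)
    (hyag : ∀ x0 : Fin d → ℕ, x0 ≠ 0 → ∀ z : Fin d → ℕ, z ≠ 0 →
      Tendsto (fun k =>
          (μ x0 {ω | ω k = z}).toReal / (μ x0 {ω | ω k ≠ 0}).toReal) atTop
        (nhds (ν z))) :
    ∀ r : Fin d → ℝ, (∀ i, 0 ≤ r i) → (∀ i, r i ≤ 1) → ∀ i j : Fin d,
      Tendsto (fun k => (ρ ^ k)⁻¹ *
          ∑' z : Fin d → ℕ, (μ (Pi.single j 1) {ω | ω k = z}).toReal * (z i : ℝ) *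
            npow r (z - Pi.single i 1)) atTop
        (nhds (γ * u j *
          ∑' z : Fin d → ℕ, ν z * (z i : ℝ) * npow r (z - Pi.single i 1))) := by
  intro r hr0 hr1 i j
  set x : Fin d → ℕ := Pi.single j 1
  have hx : x ≠ 0 := by simp [x]
  have := hμ.1 x
  obtain ⟨C, hC⟩ := exists_sum_measure_mul_sq_le hp hμ hmom2 hMdef hρ0 hsub hu hMu x
  set w : (Fin d → ℕ) → ℝ := fun z => (z i : ℝ) * npow r (z - Pi.single i 1)
  have hlim : ∀ z, Tendsto (fun k => (ρ ^ k)⁻¹ * (μ x {ω | ω k = z}).toReal * w z) atTop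
      (𝓝 (γ * u j * ν z * w z)) := by
    intro z
    by_cases hz : z = 0
    · simp [hz, w]
    refine (tendsto_mul_measure_eval_eq hz ?_ (hyag x hx z hz)).mul_const (w z)
    simpa [x, Pi.single_apply] using hgam x hx
  have hwS : ∀ A > 0, ∃ F : Finset (Fin d → ℕ), ∀ z ∉ F, A * w z ≤ (∑ l, (z l : ℝ)) ^ 2 := by
    intro A hA
    obtain ⟨F, hF⟩ := exists_finset_forall_notMem_mul_le_sq_sum (d := d) hA.le
    exact ⟨F, fun z hz => (mul_le_mul_of_nonneg_left
      (natCast_mul_npow_le_sum hr0 hr1 z _ i) hA.le).trans (hF z hz)⟩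
  have key := tendsto_tsum_mul_of_sum_mul_le (fun k z => by positivity)
    (fun z => mul_nonneg (Nat.cast_nonneg _) (npow_nonneg hr0 _)) hlim hC hwS
  convert key using 2 with k
  · rw [← tsum_mul_left]
    exact tsum_congr fun z => by ring
  · rw [← tsum_mul_left]
    exact tsum_congr fun z => by ring

/-- for a subcritical positive regular nonsingular GW process with finite
second moments, `lim_k ρ^{-k} ∂f_{k,j}(r)/∂r_i = γ u_j ∂g(r)/∂r_i`, where the partial
derivatives are expressed as the corresponding power series
`∂f_{k,j}(r)/∂r_i = Σ_z P_k(e_j, z) z_i r^{z − e_i}` and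
`∂g(r)/∂r_i = Σ_z ν(z) z_i r^{z − e_i}`. -/
theorem deriv_iterate_limit {d : ℕ} (p : Fin d → (Fin d → ℕ) → ℝ)
    (hp : ∀ i, IsPMF (p i))
    (μ : (Fin d → ℕ) → Measure (ℕ → Fin d → ℕ)) (hμ : IsGW p μ)
    (hmom2 : ∀ i, Summable fun k => p i k * (∑ j, (k j : ℝ)) ^ 2)
    (M : Matrix (Fin d) (Fin d) ℝ) (hMdef : ∀ i j, M i j = ∑' k, p i k * (k j : ℝ))
    (posreg : ∃ n, ∀ i j, 0 < (M ^ n) i j)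
    (hns : ∃ i k, 0 < p i k ∧ (∑ j, k j) ≠ 1)
    (ρ : ℝ) (hρ0 : 0 < ρ) (hsub : ρ < 1)
    (u v : Fin d → ℝ) (hu : ∀ i, 0 < u i) (hv : ∀ i, 0 < v i)
    (hMu : M.mulVec u = ρ • u) (hvM : M.vecMul v = ρ • v)
    (hnorm1 : ∑ i, u i = 1) (hnorm2 : ∑ i, u i * v i = 1)
    (γ : ℝ) (hγ : 0 < γ)
    (hgam : ∀ x : Fin d → ℕ, x ≠ 0 →
      Tendsto (fun k => (ρ ^ k)⁻¹ * (μ x {ω | ω k ≠ 0}).toReal) atTop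
        (nhds (γ * ∑ i, (x i : ℝ) * u i)))
    (ν : (Fin d → ℕ) → ℝ) (hν0 : ν 0 = 0)
    (hyag : ∀ x0 : Fin d → ℕ, x0 ≠ 0 → ∀ z : Fin d → ℕ, z ≠ 0 →
      Tendsto (fun k =>
          (μ x0 {ω | ω k = z}).toReal / (μ x0 {ω | ω k ≠ 0}).toReal) atTop
        (nhds (ν z))) :
    ∀ r : Fin d → ℝ, (∀ i, 0 ≤ r i) → (∀ i, r i ≤ 1) → ∀ i j : Fin d,
      Tendsto (fun k => (ρ ^ k)⁻¹ *
          ∑' z : Fin d → ℕ, (μ (Pi.single j 1) {ω | ω k = z}).toReal * (z i : ℝ) *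
            npow r (z - Pi.single i 1)) atTop
        (nhds (γ * u j *
          ∑' z : Fin d → ℕ, ν z * (z i : ℝ) * npow r (z - Pi.single i 1))) :=
  deriv_iterate_limit_general p hp μ hμ hmom2 M hMdef ρ hρ0 hsub u hu hMu γ hgam ν hyag

end GW
end
end
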